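/- Let (c_p) be a sequence of integers indexed by the primes with c₂ ≡ 1 (mod 2) and c_p ≡ 0 (mod p) for all primes p > 2. Then the family S((c_p)) given by ψ_p(x) = c_p x² is a filtered λ-ring structure on ℤ[x]/(x³). Moreover, for two such sequences (c_p) and (c'_p), the structures S((c_p)) and S((c'_p)) are isomorphic if and only if c_p = c'_p for all primes p or c_p = −c'_p for all primes p. -/

import Mathlib

open Polynomial

noncomputable section

/-- The truncated polynomial ring `ℤ[x]/(xⁿ)`. -/
abbrev TP (n : ℕ) : Type := Polynomial ℤ ⧸ Ideal.span {(X : Polynomial ℤ) ^ n}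

/-- The class of `x` in `ℤ[x]/(xⁿ)`. -/
def xx (n : ℕ) : TP n := Ideal.Quotient.mk _ (X : Polynomial ℤ)

/-- A filtered λ-ring structure on `ℤ[x]/(xⁿ)`, presented (via Wilkerson's theorem) as a
family of Adams operations `ψ p`, indexed by the primes `p`: each `ψ p` is a ring
endomorphism preserving the filtration ideal `(x)`, they pairwise commute, and
`ψ p r ≡ r ^ p (mod p)`. -/
structure AdamsFamily (n : ℕ) : Type where
  ψ : Nat.Primes → (TP n →+* TP n)
  maps_ideal : ∀ (p : Nat.Primes), ∀ a ∈ Ideal.span {xx n}, ψ p a ∈ Ideal.span {xx n}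
  comm : ∀ p q : Nat.Primes, (ψ p).comp (ψ q) = (ψ q).comp (ψ p)
  frob : ∀ (p : Nat.Primes) (a : TP n),
    ψ p a - a ^ (p : ℕ) ∈ Ideal.span {((p : ℕ) : TP n)}

/-- Isomorphism of filtered λ-ring structures on `ℤ[x]/(xⁿ)`: a filtration-preserving ring
automorphism intertwining the Adams operations. -/
def AdamsIso {n : ℕ} (R S : AdamsFamily n) : Prop :=
  ∃ σ : TP n ≃+* TP n,
    (Ideal.span {xx n}).map σ.toRingHom = Ideal.span {xx n} ∧
    ∀ p : Nat.Primes, σ.toRingHom.comp (R.ψ p) = (S.ψ p).comp σ.toRingHom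

/-- The prime 2 as an element of `Nat.Primes`. -/
def P2 : Nat.Primes := ⟨2, Nat.prime_two⟩

/-- The prime 3 as an element of `Nat.Primes`. -/
def P3 : Nat.Primes := ⟨3, Nat.prime_three⟩

/-! Each `ψ_p` is determined by `ψ_p(x)`, and `x ↦ c_p x²` is well defined and makes any two
`ψ_p` commute because `(c_p x²)² = 0`. The congruence `ψ_p(r) ≡ r^p` need only be checked on
`x`, since `ψ_p` and the Frobenius are ring maps into `ℤ[x]/(x³, p)`, a ring of characteristic
`p`; on `x` it says that `c₂` is odd, and for `p ≥ 3` (where `x^p = 0`) that `p ∣ c_p`.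
A filtered isomorphism `σ` sends `x` to `a x + b x²` with `a` a unit, as `σ` is onto, so
`a = ±1`; comparing the `x²`-coefficients of `σ ψ_p(x) = ψ'_p σ(x)` gives `c_p a² = a c'_p`.
Conversely `x ↦ ±x` realises both signs. -/

theorem intCast_mem_span_natCast {R : Type*} [CommRing R] {p : ℕ} {c : ℤ} (h : (p : ℤ) ∣ c) :
    (c : R) ∈ Ideal.span {(p : R)} :=
  Ideal.mem_span_singleton.mpr (by exact_mod_cast Int.cast_dvd_cast _ _ h)

namespace TP

variable {n : ℕ}

theorem xx_pow_eq_zero_of_le {k : ℕ} (h : n ≤ k) : xx n ^ k = 0 :=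
  pow_eq_zero_of_le h (Ideal.Quotient.eq_zero_iff_mem.mpr (Ideal.mem_span_singleton_self _))

theorem ringHom_ext {S : Type*} [Semiring S] {f g : TP n →+* S} (h : f (xx n) = g (xx n)) :
    f = g :=
  Ideal.Quotient.ringHom_ext (Polynomial.ringHom_ext' (RingHom.ext_int _ _) h)

def lift {R : Type*} [CommRing R] (t : R) (ht : t ^ n = 0) : TP n →+* R :=
  Ideal.Quotient.lift _ (eval₂RingHom (Int.castRingHom R) t) fun f hf => by
    obtain ⟨g, rfl⟩ := Ideal.mem_span_singleton'.mp hf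
    simp [ht]

@[simp]
theorem lift_xx {R : Type*} [CommRing R] (t : R) (ht : t ^ n = 0) : lift t ht (xx n) = t := by
  simp [lift, xx]

theorem mk_eq_mk_iff {f g : ℤ[X]} :
    (Ideal.Quotient.mk _ f : TP n) = Ideal.Quotient.mk _ g ↔ ∀ d < n, f.coeff d = g.coeff d := by
  simp only [Ideal.Quotient.eq, Ideal.mem_span_singleton, X_pow_dvd_iff, coeff_sub, sub_eq_zero]

theorem map_mem_span_xx {ψ : TP n →+* TP n} (h : ψ (xx n) ∈ Ideal.span {xx n}) {a : TP n}
    (ha : a ∈ Ideal.span {xx n}) : ψ a ∈ Ideal.span {xx n} := by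
  obtain ⟨w, rfl⟩ := Ideal.mem_span_singleton'.mp ha
  rw [map_mul]
  exact Ideal.mul_mem_left _ _ h

theorem unit_mul_xx_pow (u : ℤˣ) : ((u : ℤ) * xx n : TP n) ^ n = 0 := by
  rw [mul_pow, xx_pow_eq_zero_of_le le_rfl, mul_zero]

def scaleEquiv (u : ℤˣ) : TP n ≃+* TP n :=
  RingEquiv.ofRingHom (lift _ (unit_mul_xx_pow u)) (lift _ (unit_mul_xx_pow u⁻¹))
    (ringHom_ext (by simp [← mul_assoc, ← Int.cast_mul]))
    (ringHom_ext (by simp [← mul_assoc, ← Int.cast_mul]))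

@[simp]
theorem scaleEquiv_xx (u : ℤˣ) : scaleEquiv u (xx n) = (u : ℤ) * xx n :=
  lift_xx _ (unit_mul_xx_pow u)

theorem map_span_xx_scaleEquiv (u : ℤˣ) :
    (Ideal.span {xx n}).map (scaleEquiv u).toRingHom = Ideal.span {xx n} := by
  rw [Ideal.map_span, Set.image_singleton]
  change Ideal.span {scaleEquiv u (xx n)} = _
  rw [scaleEquiv_xx]
  exact Ideal.span_singleton_mul_left_unit (u.isUnit.map (Int.castRingHom _)) _

theorem natCast_mem_nonunits (hn : n ≠ 0) {p : ℕ} (hp : p.Prime) :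
    (p : TP n) ∈ nonunits (TP n) := fun h => by
  have : Fact p.Prime := ⟨hp⟩
  have h0 := h.map (lift (0 : ZMod p) (zero_pow hn))
  rw [map_natCast, ZMod.natCast_self] at h0
  exact not_isUnit_zero h0

theorem sub_pow_mem_of_xx (hn : n ≠ 0) {p : ℕ} [Fact p.Prime] (ψ : TP n →+* TP n)
    (h : ψ (xx n) - xx n ^ p ∈ Ideal.span {(p : TP n)}) (a : TP n) :
    ψ a - a ^ p ∈ Ideal.span {(p : TP n)} := by
  have := CharP.quotient (TP n) p (natCast_mem_nonunits hn Fact.out)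
  set π := Ideal.Quotient.mk (Ideal.span {(p : TP n)})
  have hψ : π.comp ψ = (frobenius (TP n ⧸ Ideal.span {(p : TP n)}) p).comp π := by
    refine ringHom_ext ?_
    simpa [frobenius_def, sub_eq_zero, π, ← Ideal.Quotient.eq_zero_iff_mem] using h
  rw [← Ideal.Quotient.eq_zero_iff_mem, map_sub, ← RingHom.comp_apply, hψ, RingHom.comp_apply,
    frobenius_def, map_pow]
  exact sub_self _

theorem add_mul_xx_add_mul_xx_sq_eq_mk (a b c : ℤ) :
    (a : TP 3) + (b : TP 3) * xx 3 + (c : TP 3) * xx 3 ^ 2 =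
      Ideal.Quotient.mk _ (C a + C b * X + C c * X ^ 2) := by
  have hC (k : ℤ) : Ideal.Quotient.mk (Ideal.span {(X : ℤ[X]) ^ 3}) (C k) = k :=
    eq_intCast ((Ideal.Quotient.mk (Ideal.span {(X : ℤ[X]) ^ 3})).comp C) k
  simp only [map_add, map_mul, map_pow, hC, xx]

theorem exists_eq_add_mul_xx_add_mul_xx_sq (z : TP 3) :
    ∃ a b c : ℤ, z = (a : TP 3) + (b : TP 3) * xx 3 + (c : TP 3) * xx 3 ^ 2 := by
  obtain ⟨f, rfl⟩ := Ideal.Quotient.mk_surjective z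
  refine ⟨f.coeff 0, f.coeff 1, f.coeff 2, ?_⟩
  rw [add_mul_xx_add_mul_xx_sq_eq_mk, mk_eq_mk_iff]
  intro d hd
  interval_cases d <;>
    simp only [coeff_add, coeff_C, coeff_C_mul, coeff_X, coeff_X_pow] <;> norm_num

theorem add_mul_xx_add_mul_xx_sq_inj {a b c a' b' c' : ℤ} :
    (a : TP 3) + (b : TP 3) * xx 3 + (c : TP 3) * xx 3 ^ 2 =
        (a' : TP 3) + (b' : TP 3) * xx 3 + (c' : TP 3) * xx 3 ^ 2 ↔
      a = a' ∧ b = b' ∧ c = c' := by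
  simp only [add_mul_xx_add_mul_xx_sq_eq_mk, mk_eq_mk_iff, coeff_add, coeff_C, coeff_C_mul,
    coeff_X, coeff_X_pow]
  refine ⟨fun h => ⟨?_, ?_, ?_⟩, ?_⟩
  · simpa using h 0
  · simpa using h 1
  · simpa using h 2
  · rintro ⟨rfl, rfl, rfl⟩ _ _
    rfl

theorem exists_eq_of_mem_span_xx {z : TP 3} (hz : z ∈ Ideal.span {xx 3}) :
    ∃ a b : ℤ, z = (a : TP 3) * xx 3 + (b : TP 3) * xx 3 ^ 2 := by
  obtain ⟨w, rfl⟩ := Ideal.mem_span_singleton'.mp hz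
  obtain ⟨a, b, c, rfl⟩ := exists_eq_add_mul_xx_add_mul_xx_sq w
  refine ⟨a, b, ?_⟩
  linear_combination (c : TP 3) * xx_pow_eq_zero_of_le (le_refl 3)

theorem mul_xx_sq_sq (c : TP 3) : (c * xx 3 ^ 2) ^ 2 = 0 := by
  linear_combination c ^ 2 * xx_pow_eq_zero_of_le (n := 3) (k := 4) (by norm_num)

theorem mul_xx_add_mul_xx_sq_sq (a b : TP 3) :
    (a * xx 3 + b * xx 3 ^ 2) ^ 2 = a ^ 2 * xx 3 ^ 2 := by
  linear_combination (2 * a * b + b ^ 2 * xx 3) * xx_pow_eq_zero_of_le (le_refl 3)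

theorem intCast_mul_xx_sq_inj {c c' : ℤ} :
    (c : TP 3) * xx 3 ^ 2 = (c' : TP 3) * xx 3 ^ 2 ↔ c = c' := by
  simpa using
    add_mul_xx_add_mul_xx_sq_inj (a := 0) (b := 0) (c := c) (a' := 0) (b' := 0) (c' := c')

theorem mul_xx_sq_mem_span_xx (c : TP 3) : c * xx 3 ^ 2 ∈ Ideal.span {xx 3} :=
  Ideal.mul_mem_left _ _ (Ideal.pow_mem_of_mem _ (Ideal.mem_span_singleton_self _) 2 two_pos)

theorem map_mul_xx_add_mul_xx_sq {ψ : TP 3 →+* TP 3} {d : ℤ} (h : ψ (xx 3) = d * xx 3 ^ 2)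
    (a b : ℤ) :
    ψ ((a : TP 3) * xx 3 + (b : TP 3) * xx 3 ^ 2) = ((a * d : ℤ) : TP 3) * xx 3 ^ 2 := by
  rw [map_add, map_mul, map_mul, map_intCast, map_intCast, map_pow, h, mul_xx_sq_sq]
  push_cast
  ring

theorem isUnit_of_ringEquiv_xx (σ : TP 3 ≃+* TP 3) {a b : ℤ}
    (h : σ (xx 3) = (a : TP 3) * xx 3 + (b : TP 3) * xx 3 ^ 2) : IsUnit a := by
  obtain ⟨u, v, w, hy⟩ := exists_eq_add_mul_xx_add_mul_xx_sq (σ.symm (xx 3))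
  have hx : ((0 : ℤ) : TP 3) + ((1 : ℤ) : TP 3) * xx 3 + ((0 : ℤ) : TP 3) * xx 3 ^ 2 =
      (u : TP 3) + ((v * a : ℤ) : TP 3) * xx 3 + ((v * b + w * a ^ 2 : ℤ) : TP 3) * xx 3 ^ 2 := by
    calc _ = σ (σ.symm (xx 3)) := by simp
      _ = _ := by
        rw [hy, map_add, map_add, map_mul, map_mul, map_intCast, map_intCast, map_intCast, map_pow,
          h, mul_xx_add_mul_xx_sq_sq]
        push_cast
        ring
  exact IsUnit.of_mul_eq_one_right v (add_mul_xx_add_mul_xx_sq_inj.mp hx).2.1.symm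

end TP

namespace AdamsFamily

theorem intCast_mul_xx_sq_sub_xx_pow_mem (c : Nat.Primes → ℤ) (hc2 : Int.ModEq 2 (c P2) 1)
    (hcp : ∀ p : Nat.Primes, 2 < (p : ℕ) → ((p : ℕ) : ℤ) ∣ c p) (p : Nat.Primes) :
    (c p : TP 3) * xx 3 ^ 2 - xx 3 ^ (p : ℕ) ∈ Ideal.span {((p : ℕ) : TP 3)} := by
  rcases p.2.two_le.eq_or_lt with h | h
  · obtain rfl : p = P2 := Subtype.ext h.symm
    change (c P2 : TP 3) * xx 3 ^ 2 - xx 3 ^ 2 ∈ _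
    rw [show (c P2 : TP 3) * xx 3 ^ 2 - xx 3 ^ 2 = ((c P2 - 1 : ℤ) : TP 3) * xx 3 ^ 2 by
      push_cast; ring]
    exact Ideal.mul_mem_right _ _ (intCast_mem_span_natCast hc2.symm.dvd)
  · rw [TP.xx_pow_eq_zero_of_le h, sub_zero]
    exact Ideal.mul_mem_right _ _ (intCast_mem_span_natCast (hcp p h))

/-- The structure `S((c_p))`, with `ψ_p(x) = c_p x²`. -/
def quadratic (c : Nat.Primes → ℤ) (hc2 : Int.ModEq 2 (c P2) 1)
    (hcp : ∀ p : Nat.Primes, 2 < (p : ℕ) → ((p : ℕ) : ℤ) ∣ c p) : AdamsFamily 3 where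
  ψ p := TP.lift ((c p : TP 3) * xx 3 ^ 2) (pow_eq_zero_of_le (by norm_num) (TP.mul_xx_sq_sq _))
  maps_ideal p _ := TP.map_mem_span_xx (by rw [TP.lift_xx]; exact TP.mul_xx_sq_mem_span_xx _)
  comm p q := TP.ringHom_ext (by simp [TP.mul_xx_sq_sq])
  frob p :=
    have : Fact (p : ℕ).Prime := ⟨p.2⟩
    TP.sub_pow_mem_of_xx (by norm_num) _
      (by rw [TP.lift_xx]; exact intCast_mul_xx_sq_sub_xx_pow_mem c hc2 hcp p)

theorem quadratic_ψ_xx (c : Nat.Primes → ℤ) (hc2 : Int.ModEq 2 (c P2) 1)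
    (hcp : ∀ p : Nat.Primes, 2 < (p : ℕ) → ((p : ℕ) : ℤ) ∣ c p) (p : Nat.Primes) :
    (quadratic c hc2 hcp).ψ p (xx 3) = (c p : TP 3) * xx 3 ^ 2 := by
  simp [quadratic]

section Iso

variable {c c' : Nat.Primes → ℤ} {S S' : AdamsFamily 3}

theorem exists_units_of_adamsIso
    (hS : ∀ p : Nat.Primes, S.ψ p (xx 3) = (c p : TP 3) * xx 3 ^ 2)
    (hS' : ∀ p : Nat.Primes, S'.ψ p (xx 3) = (c' p : TP 3) * xx 3 ^ 2)
    (h : AdamsIso S S') : ∃ u : ℤˣ, ∀ p, c p = u * c' p := by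
  obtain ⟨σ, hσx, hσψ⟩ := h
  have hx : σ (xx 3) ∈ Ideal.span {xx 3} :=
    hσx ▸ Ideal.mem_map_of_mem _ (Ideal.mem_span_singleton_self _)
  obtain ⟨a, b, hab⟩ := TP.exists_eq_of_mem_span_xx hx
  obtain ⟨u, rfl⟩ := TP.isUnit_of_ringEquiv_xx σ hab
  refine ⟨u, fun p => ?_⟩
  have hp : ((c p * u ^ 2 : ℤ) : TP 3) * xx 3 ^ 2 = ((u * c' p : ℤ) : TP 3) * xx 3 ^ 2 := by
    have := RingHom.congr_fun (hσψ p) (xx 3)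
    simp only [RingHom.comp_apply, RingEquiv.toRingHom_eq_coe, RingEquiv.coe_toRingHom, hS] at this
    rw [map_mul, map_intCast, map_pow, hab, TP.mul_xx_add_mul_xx_sq_sq,
      TP.map_mul_xx_add_mul_xx_sq (hS' p)] at this
    push_cast at this ⊢
    linear_combination this
  linear_combination TP.intCast_mul_xx_sq_inj.mp hp - c p * Int.units_coe_mul_self u

theorem adamsIso_of_eq_units_mul
    (hS : ∀ p : Nat.Primes, S.ψ p (xx 3) = (c p : TP 3) * xx 3 ^ 2)
    (hS' : ∀ p : Nat.Primes, S'.ψ p (xx 3) = (c' p : TP 3) * xx 3 ^ 2)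
    (u : ℤˣ) (h : ∀ p, c p = u * c' p) : AdamsIso S S' := by
  refine ⟨TP.scaleEquiv u, TP.map_span_xx_scaleEquiv u, fun p => TP.ringHom_ext ?_⟩
  simp only [RingHom.comp_apply, RingEquiv.toRingHom_eq_coe, RingEquiv.coe_toRingHom, hS, hS',
    map_mul, map_intCast, map_pow, TP.scaleEquiv_xx, h p]
  have hu : ((u : ℤ) : TP 3) * (u : ℤ) = 1 := by
    rw [← Int.cast_mul, Int.units_coe_mul_self, Int.cast_one]
  push_cast
  linear_combination ((u : ℤ) * (c' p : TP 3) * xx 3 ^ 2) * hu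

theorem adamsIso_iff (hS : ∀ p : Nat.Primes, S.ψ p (xx 3) = (c p : TP 3) * xx 3 ^ 2)
    (hS' : ∀ p : Nat.Primes, S'.ψ p (xx 3) = (c' p : TP 3) * xx 3 ^ 2) :
    AdamsIso S S' ↔ ∃ u : ℤˣ, ∀ p, c p = u * c' p :=
  ⟨exists_units_of_adamsIso hS hS', fun ⟨u, hu⟩ => adamsIso_of_eq_units_mul hS hS' u hu⟩

end Iso

end AdamsFamily

theorem exists_units_forall_eq_mul_iff {ι : Type*} (f g : ι → ℤ) :
    (∃ u : ℤˣ, ∀ i, f i = u * g i) ↔ (∀ i, f i = g i) ∨ ∀ i, f i = -g i := by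
  constructor
  · rintro ⟨u, hu⟩
    rcases Int.units_eq_one_or u with rfl | rfl
    · exact Or.inl (by simpa using hu)
    · exact Or.inr (by simpa using hu)
  · rintro (h | h)
    · exact ⟨1, by simpa using h⟩
    · exact ⟨-1, by simpa using h⟩

theorem stmt5_general (c c' : Nat.Primes → ℤ)
    (hc2 : Int.ModEq 2 (c P2) 1)
    (hcp : ∀ p : Nat.Primes, 2 < (p : ℕ) → ((p : ℕ) : ℤ) ∣ c p) :
    (∃ S : AdamsFamily 3, ∀ p : Nat.Primes, S.ψ p (xx 3) = (c p : TP 3) * xx 3 ^ 2) ∧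
    (∀ S S' : AdamsFamily 3,
      (∀ p : Nat.Primes, S.ψ p (xx 3) = (c p : TP 3) * xx 3 ^ 2) →
      (∀ p : Nat.Primes, S'.ψ p (xx 3) = (c' p : TP 3) * xx 3 ^ 2) →
      (AdamsIso S S' ↔
        (∀ p : Nat.Primes, c p = c' p) ∨ (∀ p : Nat.Primes, c p = -c' p))) :=
  ⟨⟨.quadratic c hc2 hcp, AdamsFamily.quadratic_ψ_xx c hc2 hcp⟩, fun _ _ hS hS' =>
    (AdamsFamily.adamsIso_iff hS hS').trans (exists_units_forall_eq_mul_iff c c')⟩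

theorem stmt5 (c c' : Nat.Primes → ℤ)
    (hc2 : Int.ModEq 2 (c P2) 1)
    (hcp : ∀ p : Nat.Primes, 2 < (p : ℕ) → ((p : ℕ) : ℤ) ∣ c p)
    (hc2' : Int.ModEq 2 (c' P2) 1)
    (hcp' : ∀ p : Nat.Primes, 2 < (p : ℕ) → ((p : ℕ) : ℤ) ∣ c' p) :
    (∃ S : AdamsFamily 3, ∀ p : Nat.Primes, S.ψ p (xx 3) = (c p : TP 3) * xx 3 ^ 2) ∧
    (∀ S S' : AdamsFamily 3,
      (∀ p : Nat.Primes, S.ψ p (xx 3) = (c p : TP 3) * xx 3 ^ 2) →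
      (∀ p : Nat.Primes, S'.ψ p (xx 3) = (c' p : TP 3) * xx 3 ^ 2) →
      (AdamsIso S S' ↔
        (∀ p : Nat.Primes, c p = c' p) ∨ (∀ p : Nat.Primes, c p = -c' p))) :=
  stmt5_general c c' hc2 hcp
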